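/- Let β : ℕ → ℝ satisfy |β_u - Ξ| ≤ Δ with 0 ≤ Δ ≤ π/2, let g_t = exp(i ∑_{u=1}^t β_u), and let τ ≥ 0 be an integer with τΔ < π/2. Then liminf_{N→∞} |(1/N) ∑_{t=0}^{N-1-τ} conj(g_t) g_{t+τ}| ≥ cos(τΔ) > 0. -/

import Mathlib

open Complex Real Finset Filter

/-!
The lagged product `conj (g t) * g (t + τ)` is the unit complex number `exp (i θ_t)` with
`θ_t = β (t+1) + ⋯ + β (t+τ)`, and `|θ_t - τΞ| ≤ τΔ`. After rotating by `exp (-iτΞ)` every term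
has real part at least `cos (τΔ)`, so the lagged sum has norm at least `(N - τ) cos (τΔ)`;
dividing by `N` and letting `N → ∞` gives the bound.
-/

open Topology

theorem abs_sum_sub_card_mul_le {ι : Type*} (s : Finset ι) (β : ι → ℝ) {Ξ Δ : ℝ}
    (hβ : ∀ i ∈ s, |β i - Ξ| ≤ Δ) : |∑ i ∈ s, β i - #s * Ξ| ≤ #s * Δ := by
  calc |∑ i ∈ s, β i - #s * Ξ| = |∑ i ∈ s, (β i - Ξ)| := by
        rw [sum_sub_distrib, sum_const, nsmul_eq_mul]
    _ ≤ ∑ i ∈ s, |β i - Ξ| := abs_sum_le_sum_abs _ _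
    _ ≤ #s * Δ := by simpa using sum_le_sum hβ

theorem card_mul_cos_le_norm_sum_exp {ι : Type*} (s : Finset ι) (θ : ι → ℝ) {φ δ : ℝ}
    (hδ : δ ≤ π) (hθ : ∀ i ∈ s, |θ i - φ| ≤ δ) :
    #s * Real.cos δ ≤ ‖∑ i ∈ s, exp (θ i * I)‖ := by
  have hcos : ∀ i ∈ s, Real.cos δ ≤ Real.cos (θ i - φ) := fun i hi => by
    rw [← Real.cos_abs (θ i - φ)]
    exact cos_le_cos_of_nonneg_of_le_pi (abs_nonneg _) hδ (hθ i hi)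
  calc #s * Real.cos δ ≤ ∑ i ∈ s, Real.cos (θ i - φ) := by simpa using sum_le_sum hcos
    _ = (exp (-φ * I) * ∑ i ∈ s, exp (θ i * I)).re := by
        simp only [mul_sum, ← Complex.exp_add, re_sum]
        refine sum_congr rfl fun i _ => ?_
        rw [← exp_ofReal_mul_I_re]
        push_cast; ring_nf
    _ ≤ ‖exp (-φ * I) * ∑ i ∈ s, exp (θ i * I)‖ := re_le_norm _
    _ = ‖∑ i ∈ s, exp (θ i * I)‖ := by
        rw [norm_mul, ← ofReal_neg, norm_exp_ofReal_mul_I, one_mul]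

theorem norm_sum_exp_le_card {ι : Type*} (s : Finset ι) (θ : ι → ℝ) :
    ‖∑ i ∈ s, exp (θ i * I)‖ ≤ #s := by
  simpa using norm_sum_le_of_le s fun i _ => (norm_exp_ofReal_mul_I (θ i)).le

theorem sum_Icc_one_add_sub_sum_Icc_one {M : Type*} [AddCommGroup M] (f : ℕ → M) (t τ : ℕ) :
    ∑ u ∈ Icc 1 (t + τ), f u - ∑ u ∈ Icc 1 t, f u = ∑ u ∈ Ioc t (t + τ), f u := by
  have hIcc (n : ℕ) : Icc 1 n = Ioc 0 n := Icc_add_one_left_eq_Ioc 0 n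
  rw [hIcc, hIcc, ← sum_Ioc_consecutive f (Nat.zero_le t) (Nat.le_add_right t τ),
    add_sub_cancel_left]

theorem tendsto_natCast_sub_div_self (τ : ℕ) :
    Tendsto (fun N : ℕ => ((N - τ : ℕ) : ℝ) / N) atTop (𝓝 1) := by
  have h := (tendsto_const_div_atTop_nhds_zero_nat (τ : ℝ)).const_sub 1
  rw [sub_zero] at h
  refine h.congr' ?_
  filter_upwards [eventually_ge_atTop (τ + 1)] with N hN
  have hN0 : (N : ℝ) ≠ 0 := Nat.cast_ne_zero.mpr (by omega)
  rw [Nat.cast_sub (by omega), sub_div, div_self hN0]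

theorem cos_le_liminf_norm_mean_exp (θ : ℕ → ℝ) {φ δ : ℝ} (hδ : δ ≤ π)
    (hθ : ∀ t, |θ t - φ| ≤ δ) (τ : ℕ) :
    Real.cos δ ≤
      atTop.liminf fun N : ℕ => ‖(1 / (N : ℂ)) * ∑ t ∈ range (N - τ), exp (θ t * I)‖ := by
  have hnorm (N : ℕ) : ‖(1 / (N : ℂ)) * ∑ t ∈ range (N - τ), exp (θ t * I)‖ =
      ‖∑ t ∈ range (N - τ), exp (θ t * I)‖ / N := by
    rw [norm_mul, norm_div, norm_one, Complex.norm_natCast, one_div_mul_eq_div]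
  simp_rw [hnorm]
  have hlower :
      Tendsto (fun N : ℕ => ((N - τ : ℕ) : ℝ) / N * Real.cos δ) atTop (𝓝 (Real.cos δ)) := by
    simpa using (tendsto_natCast_sub_div_self τ).mul_const (Real.cos δ)
  have hupper : IsBoundedUnder (· ≤ ·) atTop
      fun N : ℕ => ‖∑ t ∈ range (N - τ), exp (θ t * I)‖ / N := by
    refine isBoundedUnder_of ⟨1, fun N => div_le_one_of_le₀ ?_ N.cast_nonneg⟩
    calc _ ≤ ((N - τ : ℕ) : ℝ) := by simpa using norm_sum_exp_le_card (range (N - τ)) θ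
      _ ≤ N := by exact_mod_cast N.sub_le τ
  rw [← hlower.liminf_eq]
  refine liminf_le_liminf (.of_forall fun N => ?_) hlower.isBoundedUnder_ge
    hupper.isCoboundedUnder_ge
  rw [div_mul_eq_mul_div]
  gcongr
  simpa using card_mul_cos_le_norm_sum_exp (range (N - τ)) θ hδ fun t _ => hθ t

theorem stmt_7_general (β : ℕ → ℝ) (Ξ Δ : ℝ) (hΔ0 : 0 ≤ Δ)
    (hβ : ∀ u, |β u - Ξ| ≤ Δ)
    (g : ℕ → ℂ) (hg : ∀ t, g t = Complex.exp (Complex.I * ∑ u ∈ Finset.Icc 1 t, β u))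
    (τ : ℕ) (hτ : (τ : ℝ) * Δ < Real.pi / 2) :
    Filter.atTop.liminf (fun N : ℕ =>
        ‖(1 / (N : ℂ)) * ∑ t ∈ Finset.range (N - τ),
          (starRingEnd ℂ) (g t) * g (t + τ)‖)
      ≥ Real.cos ((τ : ℝ) * Δ) ∧ 0 < Real.cos ((τ : ℝ) * Δ) := by
  set θ : ℕ → ℝ := fun t => ∑ u ∈ Ioc t (t + τ), β u
  have hlag (t : ℕ) : starRingEnd ℂ (g t) * g (t + τ) = exp (θ t * I) := by
    rw [hg, hg, ← exp_conj, ← Complex.exp_add, show θ t = _ from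
      (sum_Icc_one_add_sub_sum_Icc_one β t τ).symm]
    simp only [map_mul, conj_I, conj_ofReal, ofReal_sub]
    ring_nf
  have hθ (t : ℕ) : |θ t - τ * Ξ| ≤ τ * Δ := by
    simpa using abs_sum_sub_card_mul_le (Ioc t (t + τ)) β fun u _ => hβ u
  have hτΔ : 0 ≤ τ * Δ := mul_nonneg τ.cast_nonneg hΔ0
  refine ⟨?_, cos_pos_of_mem_Ioo ⟨by linarith [pi_pos], hτ⟩⟩
  simp_rw [hlag]
  exact cos_le_liminf_norm_mean_exp θ (by linarith [pi_pos]) hθ τ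

theorem stmt_7 (β : ℕ → ℝ) (Ξ Δ : ℝ) (hΔ0 : 0 ≤ Δ) (hΔπ : Δ ≤ Real.pi / 2)
    (hβ : ∀ u, |β u - Ξ| ≤ Δ)
    (g : ℕ → ℂ) (hg : ∀ t, g t = Complex.exp (Complex.I * ∑ u ∈ Finset.Icc 1 t, β u))
    (τ : ℕ) (hτ : (τ : ℝ) * Δ < Real.pi / 2) :
    Filter.atTop.liminf (fun N : ℕ =>
        ‖(1 / (N : ℂ)) * ∑ t ∈ Finset.range (N - τ),
          (starRingEnd ℂ) (g t) * g (t + τ)‖)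
      ≥ Real.cos ((τ : ℝ) * Δ) ∧ 0 < Real.cos ((τ : ℝ) * Δ) :=
  stmt_7_general β Ξ Δ hΔ0 hβ g hg τ hτ
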